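/- Let n ≥ 1 and let A = Λ(η_1,…,η_{2n}) ⊗ C[x_{2n+1}] with x_{2n+1} even. Define the Laplacian D22 = ∂_{x_{2n+1}}² + 2 Σ_{i=1}^{n} ∂_{η_i}∂_{η_{2n+1−i}}. For n+1 ≤ k ≤ 2n+1 define Δ_k = Σ_{a=0}^{k−n−1} b_a x_{2n+1}^{2(k−n−a)−1} Σ_{I ⊆ {2n−k+2,…,n}, |I| = a} η([2n+1−k] ∪ I ∪ Ī), where b_0 = 1, b_a = Π_{r=0}^{a−1}(2(k−n−r)−1), Ī = {2n+1−i : i ∈ I}, and η(J) denotes the product of η_j over j ∈ J in increasing order. Then D22 Δ_k = 0. -/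

import Mathlib

open scoped TensorProduct

noncomputable section

/-- Polynomial part `ℂ[x₁,…,x_m]`. -/
abbrev PolyPart (m : ℕ) := MvPolynomial (Fin m) ℂ

/-- Exterior part `Λ(η₁,…,η_m)`. -/
abbrev ExtPart (m : ℕ) := ExteriorAlgebra ℂ (Fin m → ℂ)

/-- The supersymmetric algebra `R = ℂ[x₁,…,x_m] ⊗ Λ(η₁,…,η_m)`. -/
abbrev SAlg (m : ℕ) := PolyPart m ⊗[ℂ] ExtPart m

/-- The even generator `x_i`. -/
def Xv {m : ℕ} (i : Fin m) : SAlg m := (MvPolynomial.X i) ⊗ₜ[ℂ] 1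

/-- The odd generator `η_i`. -/
def ηv {m : ℕ} (i : Fin m) : SAlg m :=
  1 ⊗ₜ[ℂ] (ExteriorAlgebra.ι ℂ (Pi.single i 1))

/-- The partial derivative `∂_{x_i}` (acting on the polynomial factor). -/
def dX {m : ℕ} (i : Fin m) : SAlg m →ₗ[ℂ] SAlg m :=
  LinearMap.rTensor (ExtPart m) (MvPolynomial.pderiv i).toLinearMap

/-- The odd left superderivation `∂_{η_i}` with `∂_{η_i}(η_j) = δ_{ij}`, realized as
left contraction of the exterior factor with the `i`-th coordinate functional. -/
def dη {m : ℕ} (i : Fin m) : SAlg m →ₗ[ℂ] SAlg m :=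
  LinearMap.lTensor (PolyPart m)
    (CliffordAlgebra.contractLeft (LinearMap.proj i : (Fin m → ℂ) →ₗ[ℂ] ℂ))

/-- Multiplication by `x_i`. -/
def mX {m : ℕ} (i : Fin m) : SAlg m →ₗ[ℂ] SAlg m := LinearMap.mulLeft ℂ (Xv i)

/-- Multiplication by `η_i`. -/
def mη {m : ℕ} (i : Fin m) : SAlg m →ₗ[ℂ] SAlg m := LinearMap.mulLeft ℂ (ηv i)

/-- `D₁₂ = ∂_{x_{2n+1}}∂_{η_{2n+1}} + Σ_{i=1}^{n}(∂_{x_i}∂_{η_{2n+1−i}} − ∂_{x_{2n+1−i}}∂_{η_i})`. -/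
def D12g (n : ℕ) : SAlg (2*n+1) →ₗ[ℂ] SAlg (2*n+1) :=
  dX (Fin.last (2*n)) ∘ₗ dη (Fin.last (2*n)) +
    ∑ i : Fin n,
      (dX ⟨i.1, by have := i.2; omega⟩ ∘ₗ dη ⟨2*n-1-i.1, by omega⟩ -
       dX ⟨2*n-1-i.1, by omega⟩ ∘ₗ dη ⟨i.1, by have := i.2; omega⟩)

/-- `D₂₂ = ∂_{x_{2n+1}}² + 2Σ_{i=1}^{n}∂_{η_i}∂_{η_{2n+1−i}}`. -/
def D22g (n : ℕ) : SAlg (2*n+1) →ₗ[ℂ] SAlg (2*n+1) :=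
  dX (Fin.last (2*n)) ∘ₗ dX (Fin.last (2*n)) +
    (2 : ℂ) • ∑ i : Fin n,
      dη ⟨i.1, by have := i.2; omega⟩ ∘ₗ dη ⟨2*n-1-i.1, by omega⟩

/-- The odd generator indexed by a natural number (zero if out of range). -/
def ηNat {m : ℕ} (j : ℕ) : SAlg m := if h : j < m then ηv ⟨j, h⟩ else 0

/-- `η(J)`: the product of the `η_j`, `j ∈ J`, in increasing order. -/
def ηFinsetNat {m : ℕ} (S : Finset ℕ) : SAlg m := ((S.sort (· ≤ ·)).map ηNat).prod

/-- The coefficient `b_a = Π_{r=0}^{a−1}(2(k−n−r)−1)` (so `b₀ = 1`). -/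
def bCoeff (n k a : ℕ) : ℂ := ∏ r ∈ Finset.range a, (2*((k : ℂ) - n - r) - 1)

/-- The harmonic highest weight vector
`Δ_k = Σ_{a=0}^{k−n−1} b_a x_{2n+1}^{2(k−n−a)−1}
  Σ_{I ⊆ {2n−k+2,…,n}, |I|=a} η([2n+1−k] ∪ I ∪ Ī)` (0-indexed internally;
`Ī = {2n+1−i : i ∈ I}`). -/
def Delta (n k : ℕ) : SAlg (2*n+1) :=
  ∑ a ∈ Finset.range (k - n),
    bCoeff n k a •
      ((Xv (Fin.last (2*n))) ^ (2*(k - n - a) - 1) *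
        ∑ I ∈ (Finset.Icc (2*n+1-k) (n-1)).powersetCard a,
          ηFinsetNat (Finset.range (2*n+1-k) ∪ I ∪ I.image (fun i => 2*n-1-i)))

namespace Scratch
variable {m : ℕ}

def ιN (m : ℕ) (j : ℕ) : ExtPart m :=
  if h : j < m then ExteriorAlgebra.ι ℂ (Pi.single (⟨j, h⟩ : Fin m) 1) else 0

def wl (m : ℕ) (l : List ℕ) : ExtPart m := (l.map (ιN m)).prod

def cF (m : ℕ) (i : Fin m) : ExtPart m →ₗ[ℂ] ExtPart m :=
  CliffordAlgebra.contractLeft (LinearMap.proj i)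

theorem cF_one (i : Fin m) : cF m i 1 = 0 := by
  simp [cF, CliffordAlgebra.contractLeft_one]

theorem cF_ιN_mul (i : Fin m) (a : ℕ) (ha : a < m) (x : ExtPart m) :
    cF m i (ιN m a * x) = (if i.1 = a then (1:ℂ) else 0) • x - ιN m a * cF m i x := by
  rw [ιN, dif_pos ha, cF, CliffordAlgebra.contractLeft_ι_mul]
  congr 2
  simp [LinearMap.proj, Pi.single_apply, Fin.ext_iff]

theorem cF_wl (i : Fin m) (l : List ℕ) (hl : l.Nodup) (hm : ∀ x ∈ l, x < m) :
    cF m i (wl m l) =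
      if i.1 ∈ l then ((-1 : ℂ) ^ l.idxOf i.1) • wl m (l.erase i.1) else 0 := by
  induction l with
  | nil => simpa [wl] using cF_one i
  | cons a l ih =>
    have ha : a < m := hm a List.mem_cons_self
    have hwl : wl m (a :: l) = ιN m a * wl m l := by simp [wl]
    have ih' := ih (List.nodup_cons.mp hl).2 (fun x hx => hm x (List.mem_cons_of_mem a hx))
    rw [hwl, cF_ιN_mul i a ha, ih']
    rcases eq_or_ne (i.1) a with h | h
    · subst h
      have hnotin : i.1 ∉ l := (List.nodup_cons.mp hl).1
      rw [if_neg hnotin, if_pos rfl, if_pos List.mem_cons_self]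
      simp
    · rw [if_neg h]
      by_cases hi : i.1 ∈ l
      · rw [if_pos hi, if_pos (List.mem_cons_of_mem a hi),
          List.idxOf_cons_ne _ (Ne.symm h), List.erase_cons_tail (by simpa using Ne.symm h)]
        rw [zero_smul, zero_sub, mul_smul_comm,
          show wl m (a :: l.erase i.1) = ιN m a * wl m (l.erase i.1) by simp [wl],
          Nat.succ_eq_add_one, pow_succ]
        ring_nf
        rw [neg_smul]
      · rw [if_neg hi, if_neg (by simp only [List.mem_cons, not_or]; exact ⟨h, hi⟩)]
        simp


def ew (m : ℕ) (S : Finset ℕ) : ExtPart m := wl m (S.sort (· ≤ ·))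

theorem indexOf_sorted {l : List ℕ} (hl : l.Pairwise (· < ·)) {j : ℕ} (hj : j ∈ l) :
    l.idxOf j = (l.filter (· < j)).length := by
  induction l with
  | nil => simp at hj
  | cons a l ih =>
    have hal : ∀ b ∈ l, a < b := fun b hb => (List.pairwise_cons.mp hl).1 b hb
    rcases eq_or_ne j a with h | h
    · subst h
      have hno : ∀ b ∈ j :: l, ¬ (b < j) := by
        intro b hb
        rcases List.mem_cons.mp hb with rfl | hb
        · exact lt_irrefl b
        · exact not_lt.mpr (le_of_lt (hal b hb))
      rw [List.idxOf_cons_self, List.filter_eq_nil_iff.mpr (by simpa using hno), List.length_nil]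
    · have hjl : j ∈ l := by rcases List.mem_cons.mp hj with h' | h' <;> [exact absurd h' h; exact h']
      have haj : a < j := hal j hjl
      rw [List.idxOf_cons_ne _ (Ne.symm h), ih (List.pairwise_cons.mp hl).2 hjl]
      simp [List.filter_cons, haj]

theorem sort_erase (S : Finset ℕ) (j : ℕ) :
    (S.sort (· ≤ ·)).erase j = (S.erase j).sort (· ≤ ·) := by
  haveI : IsAntisymm ℕ (· < ·) := ⟨fun a b h h' => absurd h' (lt_asymm h)⟩
  have hperm : List.Perm ((S.sort (· ≤ ·)).erase j) ((S.erase j).sort (· ≤ ·)) := by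
    rw [← Multiset.coe_eq_coe, ← Multiset.coe_erase, Finset.sort_eq, Finset.sort_eq,
      Finset.erase_val]
  have h1 : List.Pairwise (· < ·) ((S.sort (· ≤ ·)).erase j) :=
    (Finset.sortedLT_sort S).pairwise.sublist List.erase_sublist
  exact List.Perm.eq_of_pairwise' h1 (Finset.sortedLT_sort _).pairwise hperm

theorem length_filter_sort (S : Finset ℕ) (p : ℕ → Prop) [DecidablePred p] :
    ((S.sort (· ≤ ·)).filter (fun x => decide (p x))).length = (S.filter p).card := by
  have : (((S.sort (· ≤ ·)).filter (fun x => decide (p x)) : List ℕ) : Multiset ℕ)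
      = (S.filter p).val := by
    rw [← Multiset.filter_coe, Finset.sort_eq, Finset.filter_val]
  calc ((S.sort (· ≤ ·)).filter (fun x => decide (p x))).length
      = Multiset.card (((S.sort (· ≤ ·)).filter (fun x => decide (p x)) : List ℕ) : Multiset ℕ) := by
        simp
    _ = (S.filter p).card := by rw [this]; rfl

theorem cF_ew (j : Fin m) (S : Finset ℕ) (hm : ∀ x ∈ S, x < m) :
    cF m j (ew m S) =
      if j.1 ∈ S then ((-1 : ℂ) ^ (S.filter (· < j.1)).card) • ew m (S.erase j.1) else 0 := by
  rw [ew, cF_wl j _ (Finset.sort_nodup _ _) (fun x hx => hm x ((Finset.mem_sort _).mp hx))]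
  by_cases hj : j.1 ∈ S
  · rw [if_pos ((Finset.mem_sort _).mpr hj), if_pos hj,
      indexOf_sorted (Finset.sortedLT_sort S).pairwise ((Finset.mem_sort _).mpr hj),
      sort_erase, length_filter_sort S (· < j.1)]
    rfl
  · rw [if_neg (fun h => hj ((Finset.mem_sort _).mp h)), if_neg hj]

theorem cF_cF_ew (i j : Fin m) (hij : i.1 < j.1) (S : Finset ℕ) (hm : ∀ x ∈ S, x < m) :
    cF m i (cF m j (ew m S)) =
      if i.1 ∈ S ∧ j.1 ∈ S then
        ((-1 : ℂ) ^ ((S.filter (· < i.1)).card + (S.filter (· < j.1)).card)) •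
          ew m ((S.erase j.1).erase i.1)
      else 0 := by
  rw [cF_ew j S hm]
  by_cases hj : j.1 ∈ S
  · rw [if_pos hj, map_smul, cF_ew i _ (fun x hx => hm x (Finset.mem_of_mem_erase hx))]
    by_cases hi : i.1 ∈ S
    · have hi' : i.1 ∈ S.erase j.1 := Finset.mem_erase.mpr ⟨by omega, hi⟩
      rw [if_pos hi', if_pos ⟨hi, hj⟩, smul_smul, ← pow_add]
      congr 2
      · rw [add_comm]
        congr 2
        rw [Finset.filter_erase, Finset.erase_eq_of_notMem]
        intro h
        have := (Finset.mem_filter.mp h).2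
        omega
    · rw [if_neg (fun h => hi (Finset.mem_of_mem_erase h)), if_neg (fun h => hi h.1), smul_zero]
  · rw [if_neg hj, if_neg (fun h => hj h.2), map_zero]

end Scratch

namespace Scratch
variable {m : ℕ}

theorem ηNat_tmul (j : ℕ) : (ηNat j : SAlg m) = (1 : PolyPart m) ⊗ₜ[ℂ] ιN m j := by
  rw [ηNat, ιN]
  split
  · rfl
  · rw [TensorProduct.tmul_zero]

theorem prod_map_ηNat (l : List ℕ) :
    ((l.map ηNat).prod : SAlg m) = (1 : PolyPart m) ⊗ₜ[ℂ] wl m l := by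
  induction l with
  | nil => simp [wl, Algebra.TensorProduct.one_def]
  | cons a l ih =>
    rw [List.map_cons, List.prod_cons, ih, ηNat_tmul,
      Algebra.TensorProduct.tmul_mul_tmul, one_mul,
      show ιN m a * wl m l = wl m (a :: l) by simp [wl]]

theorem ηFinsetNat_tmul (S : Finset ℕ) :
    (ηFinsetNat S : SAlg m) = (1 : PolyPart m) ⊗ₜ[ℂ] ew m S := prod_map_ηNat _

theorem dX_tmul (i : Fin m) (q : PolyPart m) (w : ExtPart m) :
    dX i (q ⊗ₜ[ℂ] w) = (MvPolynomial.pderiv i q) ⊗ₜ[ℂ] w := rfl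

theorem dη_tmul (i : Fin m) (q : PolyPart m) (w : ExtPart m) :
    dη i (q ⊗ₜ[ℂ] w) = q ⊗ₜ[ℂ] cF m i w := rfl

theorem Xv_pow_mul_tmul (i : Fin m) (p : ℕ) (w : ExtPart m) :
    (Xv i) ^ p * ((1 : PolyPart m) ⊗ₜ[ℂ] w) = (MvPolynomial.X i ^ p) ⊗ₜ[ℂ] w := by
  rw [Xv, Algebra.TensorProduct.tmul_pow, one_pow, Algebra.TensorProduct.tmul_mul_tmul,
    mul_one, one_mul]

theorem pderiv_X_pow (i : Fin m) (p : ℕ) :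
    MvPolynomial.pderiv i (MvPolynomial.X i ^ p : PolyPart m)
      = (p : ℂ) • (MvPolynomial.X i ^ (p - 1)) := by
  rw [(MvPolynomial.pderiv i).leibniz_pow]
  simp [MvPolynomial.pderiv_X_self, MvPolynomial.smul_eq_C_mul]

end Scratch

namespace Scratch

def JJ (n k : ℕ) (I : Finset ℕ) : Finset ℕ :=
  Finset.range (2*n+1-k) ∪ I ∪ I.image (fun i => 2*n-1-i)

section Comb

variable {n k : ℕ} (hn : 1 ≤ n) (hk1 : n + 1 ≤ k) (hk2 : k ≤ 2*n + 1)
variable {I : Finset ℕ} (hI : I ⊆ Finset.Icc (2*n+1-k) (n-1))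

include hn hk1 hk2 hI

theorem hbI : ∀ t ∈ I, 2*n+1-k ≤ t ∧ t ≤ n-1 := fun t h => Finset.mem_Icc.mp (hI h)

theorem JJ_bound : ∀ x ∈ JJ n k I, x < 2*n+1 := by
  intro x hx
  rcases Finset.mem_union.mp hx with hx | hx
  · rcases Finset.mem_union.mp hx with hx | hx
    · have := Finset.mem_range.mp hx; omega
    · have := hbI hn hk1 hk2 hI x hx; omega
  · obtain ⟨t, ht, rfl⟩ := Finset.mem_image.mp hx
    omega

theorem mem_JJ_self {i' : ℕ} (hi' : i' ∈ I) : i' ∈ JJ n k I :=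
  Finset.mem_union.mpr (Or.inl (Finset.mem_union.mpr (Or.inr hi')))

theorem mem_JJ_bar_iff {i' : ℕ} (hi'n : i' < n) : (2*n-1-i') ∈ JJ n k I ↔ i' ∈ I := by
  constructor
  · intro hx
    rcases Finset.mem_union.mp hx with hx | hx
    · rcases Finset.mem_union.mp hx with hx | hx
      · have := Finset.mem_range.mp hx; omega
      · have := hbI hn hk1 hk2 hI _ hx; omega
    · obtain ⟨t, ht, htf⟩ := Finset.mem_image.mp hx
      have := hbI hn hk1 hk2 hI t ht
      have : t = i' := by omega
      exact this ▸ ht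
  · intro hi'
    exact Finset.mem_union.mpr (Or.inr (Finset.mem_image.mpr ⟨i', hi', rfl⟩))

theorem JJ_erase {i' : ℕ} (hi' : i' ∈ I) :
    ((JJ n k I).erase (2*n-1-i')).erase i' = JJ n k (I.erase i') := by
  have hb := hbI hn hk1 hk2 hI
  have hi'b := hb i' hi'
  ext x
  simp only [JJ, Finset.mem_erase, Finset.mem_union, Finset.mem_image, Finset.mem_range]
  constructor
  · rintro ⟨hx1, hx2, (hx | hx) | ⟨t, ht, rfl⟩⟩
    · exact Or.inl (Or.inl hx)
    · exact Or.inl (Or.inr ⟨hx1, hx⟩)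
    · refine Or.inr ⟨t, ⟨?_, ht⟩, rfl⟩
      intro h; subst h; exact hx2 rfl
  · rintro ((hx | hx) | ⟨t, ht, rfl⟩)
    · exact ⟨by omega, by omega, Or.inl (Or.inl hx)⟩
    · obtain ⟨hne, hxI⟩ := hx
      have := hb x hxI
      exact ⟨hne, by omega, Or.inl (Or.inr hxI)⟩
    · obtain ⟨hne, htI⟩ := ht
      have := hb t htI
      refine ⟨by omega, by omega, Or.inr ⟨t, htI, rfl⟩⟩

theorem pos_sum_odd {i' : ℕ} (hi' : i' ∈ I) :
    Odd (((JJ n k I).filter (· < i')).card + ((JJ n k I).filter (· < 2*n-1-i')).card) := by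
  have hb := hbI hn hk1 hk2 hI
  have hi'b := hb i' hi'
  set m' := 2*n+1-k with hm'
  have hd1 : Disjoint (Finset.range m') I := by
    rw [Finset.disjoint_left]
    intro x hx hxI
    have := hb x hxI
    have := Finset.mem_range.mp hx
    omega
  have hd2 : Disjoint (Finset.range m' ∪ I) (I.image (fun i => 2*n-1-i)) := by
    rw [Finset.disjoint_left]
    intro x hx hxI
    obtain ⟨t, ht, rfl⟩ := Finset.mem_image.mp hxI
    have := hb t ht
    rcases Finset.mem_union.mp hx with hx | hx
    · have := Finset.mem_range.mp hx; omega
    · have := hb _ hx; omega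
  have hcard : ∀ p : ℕ → Prop, ∀ _ : DecidablePred p,
      ((JJ n k I).filter p).card =
        ((Finset.range m').filter p).card + (I.filter p).card
          + ((I.image (fun i => 2*n-1-i)).filter p).card := by
    intro p hp
    have e2 : Disjoint (Finset.filter p (Finset.range m') ∪ Finset.filter p I)
        (Finset.filter p (I.image (fun i => 2*n-1-i))) := by
      rw [← Finset.filter_union]
      exact Finset.disjoint_filter_filter hd2
    rw [JJ, ← hm', Finset.filter_union, Finset.filter_union,
      Finset.card_union_of_disjoint e2,
      Finset.card_union_of_disjoint (Finset.disjoint_filter_filter hd1)]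
  rw [hcard _ _, hcard _ _]
  have c1 : (Finset.range m').filter (· < i') = Finset.range m' :=
    Finset.filter_true_of_mem (fun x hx => by have := Finset.mem_range.mp hx; omega)
  have c2 : (I.image (fun i => 2*n-1-i)).filter (· < i') = ∅ := by
    apply Finset.filter_false_of_mem
    intro x hx
    obtain ⟨t, ht, rfl⟩ := Finset.mem_image.mp hx
    have := hb t ht
    omega
  have c3 : (Finset.range m').filter (· < 2*n-1-i') = Finset.range m' :=
    Finset.filter_true_of_mem (fun x hx => by have := Finset.mem_range.mp hx; omega)
  have c4 : I.filter (· < 2*n-1-i') = I :=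
    Finset.filter_true_of_mem (fun x hx => by have := hb x hx; omega)
  have c5 : ((I.image (fun i => 2*n-1-i)).filter (· < 2*n-1-i')).card
      = (I.filter (fun t => i' < t)).card := by
    have himg : (I.image (fun i => 2*n-1-i)).filter (· < 2*n-1-i')
        = (I.filter (fun t => i' < t)).image (fun i => 2*n-1-i) := by
      ext x
      simp only [Finset.mem_filter, Finset.mem_image]
      constructor
      · rintro ⟨⟨t, ht, rfl⟩, hlt⟩
        exact ⟨t, ⟨ht, by have := hb t ht; omega⟩, rfl⟩
      · rintro ⟨t, ⟨ht, hti⟩, rfl⟩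
        exact ⟨⟨t, ht, rfl⟩, by have := hb t ht; omega⟩
    rw [himg, Finset.card_image_of_injOn]
    intro s hs t ht h
    have h2 : 2*n-1-s = 2*n-1-t := h
    have := hb s (Finset.mem_filter.mp hs).1
    have := hb t (Finset.mem_filter.mp ht).1
    omega
  have c6 : (I.filter (· < i')).card + (I.filter (fun t => i' < t)).card + 1 = I.card := by
    have hsplit : I.filter (· < i') ∪ I.filter (fun t => i' < t) = I.erase i' := by
      ext x
      simp only [Finset.mem_union, Finset.mem_filter, Finset.mem_erase]
      constructor
      · rintro (⟨h1, h2⟩ | ⟨h1, h2⟩) <;> exact ⟨by omega, h1⟩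
      · rintro ⟨h1, h2⟩
        rcases Nat.lt_or_ge x i' with h | h
        · exact Or.inl ⟨h2, h⟩
        · exact Or.inr ⟨h2, by omega⟩
    have hdisj : Disjoint (I.filter (· < i')) (I.filter (fun t => i' < t)) := by
      rw [Finset.disjoint_left]
      intro x hx hx'
      have := (Finset.mem_filter.mp hx).2
      have := (Finset.mem_filter.mp hx').2
      omega
    have := Finset.card_union_of_disjoint hdisj
    rw [hsplit, Finset.card_erase_of_mem hi'] at this
    have hIc : 1 ≤ I.card := Finset.card_pos.mpr ⟨i', hi'⟩
    omega
  rw [c1, c2, c3, c4, c5, Finset.card_range, Finset.card_empty]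
  refine ⟨m' + I.card - 1, by have hIc : 1 ≤ I.card := Finset.card_pos.mpr ⟨i', hi'⟩; omega⟩


theorem contract_sum :
    ∑ i : Fin n, cF (2*n+1) ⟨i.1, by have := i.2; omega⟩
        (cF (2*n+1) ⟨2*n-1-i.1, by omega⟩ (ew (2*n+1) (JJ n k I)))
      = - ∑ t ∈ I, ew (2*n+1) (JJ n k (I.erase t)) := by
  have hb := hbI hn hk1 hk2 hI
  have step : ∀ i : Fin n, cF (2*n+1) ⟨i.1, by have := i.2; omega⟩
      (cF (2*n+1) ⟨2*n-1-i.1, by omega⟩ (ew (2*n+1) (JJ n k I)))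
      = if i.1 ∈ I then -(ew (2*n+1) (JJ n k (I.erase i.1))) else 0 := by
    intro i
    rw [cF_cF_ew _ _ (by have := i.2; simp; omega) _ (JJ_bound hn hk1 hk2 hI)]
    by_cases hi : i.1 ∈ I
    · rw [if_pos ⟨mem_JJ_self hn hk1 hk2 hI hi,
        (mem_JJ_bar_iff hn hk1 hk2 hI i.2).mpr hi⟩, if_pos hi]
      rw [(pos_sum_odd hn hk1 hk2 hI hi).neg_one_pow, neg_one_smul,
        JJ_erase hn hk1 hk2 hI hi]
    · rw [if_neg hi, if_neg]
      intro h
      exact hi ((mem_JJ_bar_iff hn hk1 hk2 hI i.2).mp h.2)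
  calc ∑ i : Fin n, cF (2*n+1) ⟨i.1, by have := i.2; omega⟩
        (cF (2*n+1) ⟨2*n-1-i.1, by omega⟩ (ew (2*n+1) (JJ n k I)))
      = ∑ i : Fin n,
          (fun x => if x ∈ I then -(ew (2*n+1) (JJ n k (I.erase x))) else 0) i.1 :=
        Finset.sum_congr rfl (fun i _ => step i)
    _ = ∑ x ∈ Finset.range n,
          (if x ∈ I then -(ew (2*n+1) (JJ n k (I.erase x))) else 0) :=
        Fin.sum_univ_eq_sum_range
          (fun x => if x ∈ I then -(ew (2*n+1) (JJ n k (I.erase x))) else 0) n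
    _ = ∑ x ∈ Finset.range n ∩ I, -(ew (2*n+1) (JJ n k (I.erase x))) :=
        Finset.sum_ite_mem _ _ _
    _ = - ∑ t ∈ I, ew (2*n+1) (JJ n k (I.erase t)) := by
        rw [Finset.inter_eq_right.mpr (fun t ht => Finset.mem_range.mpr
          (by have := hb t ht; omega)), ← Finset.sum_neg_distrib]

end Comb

theorem sum_powersetCard_erase {β : Type*} [AddCommMonoid β] (T : Finset ℕ) (a : ℕ)
    (g : Finset ℕ → β) :
    ∑ I ∈ T.powersetCard (a+1), ∑ t ∈ I, g (I.erase t)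
      = (T.card - a) • ∑ I' ∈ T.powersetCard a, g I' := by
  classical
  have hR : (T.card - a) • ∑ I' ∈ T.powersetCard a, g I'
      = ∑ x ∈ (T.powersetCard a).sigma (fun I' => T \ I'), g x.1 := by
    rw [Finset.smul_sum, ← Finset.sum_sigma' (T.powersetCard a) (fun I' => T \ I')
      (fun I' _ => g I')]
    refine Finset.sum_congr rfl ?_
    intro I' hI'
    rw [Finset.sum_const, Finset.card_sdiff_of_subset (Finset.mem_powersetCard.mp hI').1,
      (Finset.mem_powersetCard.mp hI').2]
  rw [hR, Finset.sum_sigma' (T.powersetCard (a+1)) (fun I => I)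
    (fun I t => g (I.erase t))]
  refine Finset.sum_nbij' (fun x => ⟨x.1.erase x.2, x.2⟩) (fun x => ⟨insert x.2 x.1, x.2⟩)
    ?_ ?_ ?_ ?_ ?_
  · rintro ⟨I, t⟩ hx
    obtain ⟨hI, ht⟩ := Finset.mem_sigma.mp hx
    obtain ⟨hsub, hcard⟩ := Finset.mem_powersetCard.mp hI
    refine Finset.mem_sigma.mpr ⟨Finset.mem_powersetCard.mpr
      ⟨(Finset.erase_subset _ _).trans hsub, by rw [Finset.card_erase_of_mem ht, hcard]; rfl⟩, ?_⟩
    exact Finset.mem_sdiff.mpr ⟨hsub ht, Finset.notMem_erase _ _⟩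
  · rintro ⟨I', t⟩ hx
    obtain ⟨hI, ht⟩ := Finset.mem_sigma.mp hx
    obtain ⟨hsub, hcard⟩ := Finset.mem_powersetCard.mp hI
    obtain ⟨htT, htI⟩ := Finset.mem_sdiff.mp ht
    refine Finset.mem_sigma.mpr ⟨Finset.mem_powersetCard.mpr
      ⟨Finset.insert_subset htT hsub, by rw [Finset.card_insert_of_notMem htI, hcard]⟩, ?_⟩
    exact Finset.mem_insert_self _ _
  · rintro ⟨I, t⟩ hx
    obtain ⟨hI, ht⟩ := Finset.mem_sigma.mp hx
    simp [Finset.insert_erase ht]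
  · rintro ⟨I', t⟩ hx
    obtain ⟨hI, ht⟩ := Finset.mem_sigma.mp hx
    obtain ⟨htT, htI⟩ := Finset.mem_sdiff.mp ht
    simp [Finset.erase_insert htI]
  · rintro ⟨I, t⟩ _
    rfl


end Scratch


namespace Scratch

def Ee (n k : ℕ) (p a : ℕ) : SAlg (2*n+1) :=
  ∑ I ∈ ((Finset.Icc (2*n+1-k) (n-1)).powersetCard a),
    (MvPolynomial.X (Fin.last (2*n)) ^ p) ⊗ₜ[ℂ] ew (2*n+1) (JJ n k I)

theorem dX2_Ee (n k p a : ℕ) :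
    dX (Fin.last (2*n)) (dX (Fin.last (2*n)) (Ee n k p a))
      = (((p : ℕ) : ℂ) * ((p - 1 : ℕ) : ℂ)) • Ee n k (p - 2) a := by
  rw [Ee, Ee, map_sum, map_sum, Finset.smul_sum]
  refine Finset.sum_congr rfl fun I _ => ?_
  rw [dX_tmul, pderiv_X_pow, ← TensorProduct.smul_tmul', map_smul, dX_tmul, pderiv_X_pow,
    ← TensorProduct.smul_tmul', smul_smul]
  congr 2 <;> omega

section Comb2

variable {n k : ℕ} (hn : 1 ≤ n) (hk1 : n + 1 ≤ k) (hk2 : k ≤ 2*n + 1)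

include hn hk1 hk2

theorem dη2_Ee_gen (p a : ℕ) :
    ∑ i : Fin n, dη (m := 2*n+1) ⟨i.1, by have := i.2; omega⟩
        (dη ⟨2*n-1-i.1, by omega⟩ (Ee n k p a))
      = -∑ I ∈ ((Finset.Icc (2*n+1-k) (n-1)).powersetCard a), ∑ t ∈ I,
          (MvPolynomial.X (Fin.last (2*n)) ^ p) ⊗ₜ[ℂ] ew (2*n+1) (JJ n k (I.erase t)) := by
  rw [Ee]
  have h1 : ∀ i : Fin n,
      dη (m := 2*n+1) ⟨i.1, by have := i.2; omega⟩
        (dη ⟨2*n-1-i.1, by omega⟩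
          (∑ I ∈ ((Finset.Icc (2*n+1-k) (n-1)).powersetCard a),
            (MvPolynomial.X (Fin.last (2*n)) ^ p) ⊗ₜ[ℂ] ew (2*n+1) (JJ n k I)))
      = ∑ I ∈ ((Finset.Icc (2*n+1-k) (n-1)).powersetCard a),
          (MvPolynomial.X (Fin.last (2*n)) ^ p) ⊗ₜ[ℂ]
            (cF (2*n+1) ⟨i.1, by have := i.2; omega⟩
              (cF (2*n+1) ⟨2*n-1-i.1, by omega⟩ (ew (2*n+1) (JJ n k I)))) := by
    intro i
    rw [map_sum, map_sum]
    refine Finset.sum_congr rfl fun I _ => ?_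
    rw [dη_tmul, dη_tmul]
  rw [Finset.sum_congr rfl (fun i _ => h1 i), Finset.sum_comm]
  rw [← Finset.sum_neg_distrib]
  refine Finset.sum_congr rfl fun I hI => ?_
  have hIsub : I ⊆ Finset.Icc (2*n+1-k) (n-1) := (Finset.mem_powersetCard.mp hI).1
  rw [← TensorProduct.tmul_sum, contract_sum hn hk1 hk2 hIsub, TensorProduct.tmul_neg,
    TensorProduct.tmul_sum]

theorem dη2_Ee_zero (p : ℕ) :
    ∑ i : Fin n, dη (m := 2*n+1) ⟨i.1, by have := i.2; omega⟩
        (dη ⟨2*n-1-i.1, by omega⟩ (Ee n k p 0)) = 0 := by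
  rw [dη2_Ee_gen hn hk1 hk2 p 0]
  simp

theorem dη2_Ee_succ (p a : ℕ) :
    ∑ i : Fin n, dη (m := 2*n+1) ⟨i.1, by have := i.2; omega⟩
        (dη ⟨2*n-1-i.1, by omega⟩ (Ee n k p (a+1)))
      = -(((k-n-1-a : ℕ) : ℂ) • Ee n k p a) := by
  rw [dη2_Ee_gen hn hk1 hk2 p (a+1),
    sum_powersetCard_erase (Finset.Icc (2*n+1-k) (n-1)) a
      (fun S => (MvPolynomial.X (Fin.last (2*n)) ^ p) ⊗ₜ[ℂ] ew (2*n+1) (JJ n k S))]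
  have hc : (Finset.Icc (2*n+1-k) (n-1)).card = k - n - 1 := by
    rw [Nat.card_Icc]
    omega
  rw [hc, ← Ee, ← Nat.cast_smul_eq_nsmul ℂ]

end Comb2

end Scratch


namespace Scratch

def Av (n k a : ℕ) : SAlg (2*n+1) :=
  (bCoeff n k a * ((2*(k-n-a)-1 : ℕ) : ℂ) * ((2*(k-n-a)-2 : ℕ) : ℂ)) •
    Ee n k (2*(k-n-a)-3) a

def Bv (n k : ℕ) : ℕ → SAlg (2*n+1)
  | 0 => 0
  | (a+1) => (bCoeff n k (a+1) * 2 * ((k-n-1-a : ℕ) : ℂ)) • Ee n k (2*(k-n-(a+1))-1) a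

section Comb3

variable {n k : ℕ} (hn : 1 ≤ n) (hk1 : n + 1 ≤ k) (hk2 : k ≤ 2*n + 1)

include hn hk1 hk2

theorem term_eq (a : ℕ) (ha : a < k - n) :
    D22g n (bCoeff n k a • Ee n k (2*(k-n-a)-1) a) = Av n k a - Bv n k a := by
  rw [map_smul]
  have hD : D22g n (Ee n k (2*(k-n-a)-1) a)
      = dX (Fin.last (2*n)) (dX (Fin.last (2*n)) (Ee n k (2*(k-n-a)-1) a))
        + (2:ℂ) • ∑ i : Fin n, dη (m := 2*n+1) ⟨i.1, by have := i.2; omega⟩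
            (dη ⟨2*n-1-i.1, by omega⟩ (Ee n k (2*(k-n-a)-1) a)) := by
    simp only [D22g, LinearMap.add_apply, LinearMap.comp_apply, LinearMap.smul_apply,
      LinearMap.sum_apply]
  rw [hD, dX2_Ee]
  cases a with
  | zero =>
    rw [dη2_Ee_zero hn hk1 hk2, smul_zero, add_zero, smul_smul]
    rw [show (2*(k-n-0)-1-1 : ℕ) = 2*(k-n-0)-2 from by omega,
      show (2*(k-n-0)-1) - 2 = 2*(k-n-0)-3 from by omega]
    rw [Bv, sub_zero, Av]
    congr 1
    ring
  | succ a' =>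
    rw [dη2_Ee_succ hn hk1 hk2]
    rw [show (2*(k-n-(a'+1))-1-1 : ℕ) = 2*(k-n-(a'+1))-2 from by omega,
      show (2*(k-n-(a'+1))-1) - 2 = 2*(k-n-(a'+1))-3 from by omega]
    rw [Av, Bv, sub_eq_add_neg, smul_add]
    congr 1
    · rw [smul_smul]
      congr 1
      ring
    · rw [smul_neg, smul_neg, smul_smul, smul_smul]

theorem Bv_succ_eq_Av (a : ℕ) (ha : a + 1 < k - n) :
    Bv n k (a+1) = Av n k a := by
  rw [Bv, Av]
  have he : 2*(k-n-(a+1))-1 = 2*(k-n-a)-3 := by omega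
  rw [he]
  congr 1
  have h2 : ((k-n-1-a : ℕ) : ℂ) * 2 = ((2*(k-n-a)-2 : ℕ) : ℂ) := by
    rw [show (2*(k-n-a)-2 : ℕ) = 2 * (k-n-1-a) from by omega]
    push_cast
    ring
  have h1 : bCoeff n k (a+1) = bCoeff n k a * ((2*(k-n-a)-1 : ℕ) : ℂ) := by
    rw [bCoeff, Finset.prod_range_succ, ← bCoeff]
    congr 1
    have hle : n + a ≤ k := by omega
    have h3 : ((k-n-a : ℕ) : ℂ) = (k:ℂ) - n - a := by
      rw [Nat.sub_sub, Nat.cast_sub hle]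
      push_cast
      ring
    rw [show (2*(k-n-a)-1 : ℕ) = 2*(k-n-a)-1 from rfl,
      Nat.cast_sub (by omega : 1 ≤ 2*(k-n-a)), Nat.cast_mul, h3]
    push_cast
    ring
  rw [h1]
  rw [← h2]
  ring

theorem Av_last : Av n k (k-n-1) = 0 := by
  rw [Av, show (2*(k-n-(k-n-1))-2 : ℕ) = 0 from by omega]
  rw [Nat.cast_zero, mul_zero, zero_smul]

end Comb3

end Scratch

/-- for `n ≥ 1` and `n+1 ≤ k ≤ 2n+1`, the vector `Δ_k` is
annihilated by the Laplacian `D₂₂ = ∂_{x_{2n+1}}² + 2Σ_{i=1}^{n}∂_{η_i}∂_{η_{2n+1−i}}`. -/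
theorem stmt10 (n k : ℕ) (hn : 1 ≤ n) (hk1 : n + 1 ≤ k) (hk2 : k ≤ 2*n + 1) :
    D22g n (Delta n k) = 0 := by
  have hDelta : Delta n k = ∑ a ∈ Finset.range (k-n),
      bCoeff n k a • Scratch.Ee n k (2*(k-n-a)-1) a := by
    rw [Delta]
    refine Finset.sum_congr rfl fun a _ => ?_
    congr 1
    rw [Scratch.Ee, Finset.mul_sum]
    refine Finset.sum_congr rfl fun I _ => ?_
    rw [Scratch.ηFinsetNat_tmul, Scratch.Xv_pow_mul_tmul, Scratch.JJ]
  rw [hDelta, map_sum]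
  calc ∑ a ∈ Finset.range (k-n), D22g n (bCoeff n k a • Scratch.Ee n k (2*(k-n-a)-1) a)
      = ∑ a ∈ Finset.range (k-n), (Scratch.Av n k a - Scratch.Bv n k a) :=
        Finset.sum_congr rfl fun a ha =>
          Scratch.term_eq hn hk1 hk2 a (Finset.mem_range.mp ha)
    _ = 0 := by
        rw [Finset.sum_sub_distrib]
        obtain ⟨c', hc'⟩ : ∃ c', k - n = c' + 1 := ⟨k-n-1, by omega⟩
        rw [hc', Finset.sum_range_succ, Finset.sum_range_succ']
        have hAvlast : Scratch.Av n k c' = 0 := by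
          have h : c' = k - n - 1 := by omega
          rw [h]
          exact Scratch.Av_last hn hk1 hk2
        rw [hAvlast, add_zero, show Scratch.Bv n k 0 = 0 from rfl, add_zero,
          Finset.sum_congr rfl (fun a ha => Scratch.Bv_succ_eq_Av hn hk1 hk2 a
            (by have := Finset.mem_range.mp ha; omega))]
        exact sub_self _
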